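/- The environment process is ergodic under Q: if A ⊆ Ω_𝔎 is measurable and R1_A = 1_A holds Q-almost everywhere (where 1_A is the indicator function of A), then Q(A) ∈ {0,1}. -/

import Mathlib

open MeasureTheory Filter

noncomputable section

/-- The lattice `ℤ^d`. -/
abbrev ZLat (d : ℕ) := Fin d → ℤ

/-- The space of uniformly elliptic environments. -/
abbrev EnvSpace (d K : ℕ) := ZLat d → (Set.Icc (2:ℤ) (K:ℤ) × Set.Icc (2:ℤ) (K:ℤ))

/-- The shift `T j`. -/
def shiftT {d K : ℕ} (j : ZLat d) (e : EnvSpace d K) : EnvSpace d K := fun i => e (i + j)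

/-- Size of the active population at `i`, as a real number. -/
def Nsize {d K : ℕ} (e : EnvSpace d K) (i : ZLat d) : ℝ := ((e i).1 : ℤ)

/-- Size of the dormant population at `i`, as a real number. -/
def Msize {d K : ℕ} (e : EnvSpace d K) (i : ZLat d) : ℝ := ((e i).2 : ℤ)

/-- Total migration rate `c := Σ_{i ≠ 0} a(0,i)`. -/
def cRate {d : ℕ} (a : ZLat d → ZLat d → ℝ) : ℝ := ∑' i : ZLat d, if i = 0 then 0 else a 0 i

/-- The probability `q_s` of becoming dormant. -/
def qs {d : ℕ} (a : ZLat d → ZLat d → ℝ) (lam : ℝ) (K : ℕ) : ℝ :=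
  lam / (cRate a + lam + lam * K)

/-- The step distribution `p̂`. -/
def phat {d : ℕ} (a : ZLat d → ZLat d → ℝ) (lam : ℝ) (K : ℕ) (i : ZLat d) : ℝ :=
  if i = 0 then lam * K / (cRate a + lam * K) else a 0 i / (cRate a + lam * K)

/-- The wake-up probabilities `ω_e(i)`. -/
def omegaE {d K : ℕ} (a : ZLat d → ZLat d → ℝ) (lam : ℝ) (e : EnvSpace d K) (i : ZLat d) : ℝ :=
  lam * Nsize e i / (Msize e i * (cRate a + lam + lam * K))

/-- `n`-fold convolution power of a function on `ℤ^d`. -/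
def convPow {d : ℕ} (p : ZLat d → ℝ) : ℕ → ZLat d → ℝ
  | 0 => fun i => if i = 0 then 1 else 0
  | n + 1 => fun i => ∑' j : ZLat d, convPow p n j * p (i - j)

/-- The Markov operator `R` of the auxiliary environment process. -/
def Rop {d K : ℕ} (a : ZLat d → ZLat d → ℝ) (lam : ℝ)
    (f : EnvSpace d K × Bool → ℝ) : EnvSpace d K × Bool → ℝ := fun x =>
  match x with
  | (e, true) => qs a lam K * f (e, false)
      + (1 - qs a lam K) * ∑' j : ZLat d, phat a lam K j * f (shiftT j e, true)
  | (e, false) => omegaE a lam e 0 * f (e, true) + (1 - omegaE a lam e 0) * f (e, false)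

/-- The strip `G = ℤ^d × {0,1}`. -/
abbrev Gstrip (d : ℕ) := ZLat d × Bool

/-- One-step transition kernel of the subordinate Markov chain in environment `e`. -/
def QK {d K : ℕ} (a : ZLat d → ZLat d → ℝ) (lam : ℝ) (e : EnvSpace d K) :
    Gstrip d → Gstrip d → ℝ
  | (i, true), (j, true) => (1 - qs a lam K) * phat a lam K (j - i)
  | (i, true), (j, false) => if j = i then qs a lam K else 0
  | (i, false), (j, true) => if j = i then omegaE a lam e i else 0
  | (i, false), (j, false) => if j = i then 1 - omegaE a lam e i else 0

/-- `n`-step transition kernel of the subordinate Markov chain. -/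
def QKn {d K : ℕ} (a : ZLat d → ZLat d → ℝ) (lam : ℝ) (e : EnvSpace d K) :
    ℕ → Gstrip d → Gstrip d → ℝ
  | 0 => fun η ξ => if ξ = η then 1 else 0
  | n + 1 => fun η ξ => ∑' ζ : Gstrip d, QKn a lam e n η ζ * QK a lam e ζ ξ

/-- Time-`t` transition kernel of the single-particle dual (uniformization representation). -/
def ptk {d K : ℕ} (a : ZLat d → ZLat d → ℝ) (lam : ℝ) (e : EnvSpace d K) (t : ℝ)
    (η ξ : Gstrip d) : ℝ :=
  Real.exp (-((cRate a + lam + lam * K) * t)) *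
    ∑' n : ℕ, ((cRate a + lam + lam * K) * t) ^ n / (n.factorial : ℝ) * QKn a lam e n η ξ

end

/-!
On the dormant slice, `R 1_A = 1_A` reads `ω_e(0) (1_A(e,1) - 1_A(e,0)) = 0`, and `ω_e(0) > 0`, so
the two slices of `A` agree almost surely. On the active slice it then says that the `p̂`-average of
`j ↦ 1_A(T_j e, 1)` equals `1_A(e, 1) ∈ {0,1}`; a convex combination of values in `[0,1]` can only
equal an endpoint if every term with positive weight does, so the active slice is a.e. invariant
under each shift in the support of `p̂`. Since the shifts preserve `P̄`, irreducibility spreads this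
to all shifts, and ergodicity of `P̄` gives the slice `P̄`-measure `0` or `1`. Finally `Q` and `P̄`
have the same null sets on each slice, because the density `M₀/N₀` is positive and bounded.
-/

theorem eq_of_tsum_mul_eq_of_mem_Icc {ι : Type*} {p v : ι → ℝ} (hp : ∀ j, 0 ≤ p j) (hp1 : HasSum p 1)
    (hv : ∀ j, v j ∈ Set.Icc (0 : ℝ) 1) {c : ℝ} (hc : c = 0 ∨ c = 1)
    (h : ∑' j, p j * v j = c) {j : ι} (hj : 0 < p j) : v j = c := by
  have hpv : HasSum (fun j => p j * v j) c :=
    h ▸ (Summable.of_nonneg_of_le (fun j => mul_nonneg (hp j) (hv j).1)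
      (fun j => mul_le_of_le_one_right (hp j) (hv j).2) hp1.summable).hasSum
  rcases hc with rfl | rfl
  · have hzero := (hasSum_zero_iff_of_nonneg fun j => mul_nonneg (hp j) (hv j).1).1 hpv
    exact (mul_eq_zero.1 (congr_fun hzero j)).resolve_left hj.ne'
  · have hrest : HasSum (fun j => p j * (1 - v j)) 0 := by
      simpa only [mul_sub, mul_one, sub_self] using hp1.sub hpv
    have hzero := (hasSum_zero_iff_of_nonneg fun j =>
      mul_nonneg (hp j) (sub_nonneg.2 (hv j).2)).1 hrest
    linarith [(mul_eq_zero.1 (congr_fun hzero j)).resolve_left hj.ne']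

theorem indicator_one_eq_indicator_one_iff {γ : Type*} {A : Set γ} {x y : γ} :
    A.indicator (fun _ => (1 : ℝ)) x = A.indicator (fun _ => 1) y ↔ (x ∈ A ↔ y ∈ A) := by
  by_cases hx : x ∈ A <;> by_cases hy : y ∈ A <;> simp [hx, hy]

section ConvPow

variable {d : ℕ} {p : ZLat d → ℝ}

theorem convPow_nonneg (hp : ∀ i, 0 ≤ p i) (n : ℕ) (i : ZLat d) : 0 ≤ convPow p n i := by
  induction n generalizing i with
  | zero => simp only [convPow]; split_ifs <;> norm_num
  | succ n ih => exact tsum_nonneg fun j => mul_nonneg (ih j) (hp _)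

theorem mem_of_convPow_pos {S : Set (ZLat d)} (hp : ∀ i, 0 ≤ p i) (h0 : 0 ∈ S)
    (hstep : ∀ i j, i ∈ S → 0 < p j → i + j ∈ S) {n : ℕ} {i : ZLat d}
    (hi : 0 < convPow p n i) : i ∈ S := by
  induction n generalizing i with
  | zero =>
    obtain rfl : i = 0 := by by_contra h; simp [convPow, h] at hi
    exact h0
  | succ n ih =>
    obtain ⟨j, hj⟩ : ∃ j, 0 < convPow p n j * p (i - j) := by
      by_contra! h
      exact hi.not_ge (tsum_nonpos h)
    simpa only [add_sub_cancel] using hstep j (i - j) (ih (pos_of_mul_pos_left hj (hp _)))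
      (pos_of_mul_pos_right hj (convPow_nonneg hp n j))

end ConvPow

section Shift

variable {d K : ℕ}

theorem shiftT_zero : shiftT (K := K) (0 : ZLat d) = id := by
  funext e i; simp only [shiftT, add_zero, id]

theorem shiftT_shiftT (j k : ZLat d) (e : EnvSpace d K) :
    shiftT j (shiftT k e) = shiftT (j + k) e := by
  funext i; simp only [shiftT, add_assoc]

theorem preimage_shiftT_preimage_shiftT (j k : ZLat d) (A : Set (EnvSpace d K)) :
    shiftT k ⁻¹' (shiftT j ⁻¹' A) = shiftT (j + k) ⁻¹' A := by
  ext e; simp only [Set.mem_preimage, shiftT_shiftT]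

theorem measurable_shiftT (j : ZLat d) : Measurable (shiftT (K := K) j) :=
  measurable_pi_lambda _ fun i => measurable_pi_apply (i + j)

theorem measurePreserving_shiftT {μ : Measure (EnvSpace d K)}
    (hμ : ∀ j A, MeasurableSet A → μ (shiftT j ⁻¹' A) = μ A) (j : ZLat d) :
    MeasurePreserving (shiftT j) μ μ :=
  ⟨measurable_shiftT j, Measure.ext fun A hA => by
    rw [Measure.map_apply (measurable_shiftT j) hA, hμ j A hA]⟩

theorem preimage_shiftT_ae_eq_of_convPow_pos {μ : Measure (EnvSpace d K)}
    (hμ : ∀ j A, MeasurableSet A → μ (shiftT j ⁻¹' A) = μ A) {p : ZLat d → ℝ}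
    (hp : ∀ i, 0 ≤ p i) {A : Set (EnvSpace d K)}
    (hA : ∀ j, 0 < p j → shiftT j ⁻¹' A =ᵐ[μ] A) {n : ℕ} {i : ZLat d}
    (hi : 0 < convPow p n i) : shiftT i ⁻¹' A =ᵐ[μ] A := by
  refine mem_of_convPow_pos (S := {i | shiftT i ⁻¹' A =ᵐ[μ] A}) hp ?_ ?_ hi
  · show shiftT 0 ⁻¹' A =ᵐ[μ] A
    rw [shiftT_zero, Set.preimage_id]
    exact EventuallyEq.rfl
  · intro i j hi hj
    show shiftT (i + j) ⁻¹' A =ᵐ[μ] A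
    rw [add_comm, ← preimage_shiftT_preimage_shiftT]
    exact ((measurePreserving_shiftT hμ i).quasiMeasurePreserving.preimage_ae_eq
      (hA j hj)).trans hi

/-- Intersecting the translates of an almost invariant set yields a strictly invariant one. -/
theorem measure_eq_zero_or_one_of_ae_shift_invariant (μ : Measure (EnvSpace d K))
    (hμ : ∀ A, MeasurableSet A → (∀ j, shiftT j ⁻¹' A = A) → μ A = 0 ∨ μ A = 1)
    {A : Set (EnvSpace d K)} (hA : MeasurableSet A) (hinv : ∀ j, shiftT j ⁻¹' A =ᵐ[μ] A) :
    μ A = 0 ∨ μ A = 1 := by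
  set B := ⋂ j, shiftT j ⁻¹' A
  have hBA : B =ᵐ[μ] A := by
    simpa only [Set.iInter_const] using Filter.EventuallyEq.countable_iInter hinv
  have hB : ∀ k, shiftT k ⁻¹' B = B := fun k => by
    simp only [B, Set.preimage_iInter, preimage_shiftT_preimage_shiftT]
    exact (add_right_surjective k).iInter_comp fun j => shiftT j ⁻¹' A
  rw [← measure_congr hBA]
  exact hμ B (MeasurableSet.iInter fun j => measurable_shiftT j hA) hB

end Shift

section Populations

variable {d K : ℕ}

theorem two_le_Nsize (e : EnvSpace d K) (i : ZLat d) : 2 ≤ Nsize e i := by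
  unfold Nsize; exact_mod_cast (e i).1.2.1

theorem two_le_Msize (e : EnvSpace d K) (i : ZLat d) : 2 ≤ Msize e i := by
  unfold Msize; exact_mod_cast (e i).2.2.1

theorem Msize_le (e : EnvSpace d K) (i : ZLat d) : Msize e i ≤ K := by
  unfold Msize; exact_mod_cast (e i).2.2.2

theorem Msize_div_Nsize_pos (e : EnvSpace d K) (i : ZLat d) : 0 < Msize e i / Nsize e i :=
  div_pos (by linarith [two_le_Msize e i]) (by linarith [two_le_Nsize e i])

theorem integrable_Msize_div_Nsize (μ : Measure (EnvSpace d K)) [IsFiniteMeasure μ] :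
    Integrable (fun e => Msize e 0 / Nsize e 0) μ := by
  have hmeas : Measurable fun e : EnvSpace d K => Msize e 0 / Nsize e 0 := by
    unfold Msize Nsize; fun_prop
  refine Integrable.of_bound (C := K) hmeas.aestronglyMeasurable (ae_of_all _ fun e => ?_)
  rw [Real.norm_of_nonneg (Msize_div_Nsize_pos e 0).le,
    div_le_iff₀ (by linarith [two_le_Nsize e 0])]
  nlinarith [Msize_le e 0, two_le_Nsize e 0, two_le_Msize e 0]

end Populations

section Rates

variable {d K : ℕ} {a : ZLat d → ZLat d → ℝ} {lam : ℝ}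

theorem cRate_nonneg (ha : ∀ i, 0 ≤ a 0 i) : 0 ≤ cRate a :=
  tsum_nonneg fun i => by split_ifs <;> simp [ha i]

theorem hasSum_phat (ha : ∀ i, 0 ≤ a 0 i) (ha_sum : Summable (a 0)) (hlam : 0 < lam)
    (hK : 0 < K) : HasSum (phat a lam K) 1 := by
  have hc : HasSum (fun i => if i = 0 then 0 else a 0 i) (cRate a) :=
    (hasSum_ite_sub_hasSum ha_sum.hasSum 0).summable.hasSum
  have hpos : 0 < cRate a + lam * K := by
    have := cRate_nonneg ha
    have : (0 : ℝ) < K := by exact_mod_cast hK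
    positivity
  have h := ((hasSum_ite_eq 0 (lam * K)).add hc).div_const (cRate a + lam * K)
  rw [add_comm (lam * K), div_self hpos.ne'] at h
  refine h.congr_fun fun i => ?_
  unfold phat; split_ifs <;> simp

theorem phat_nonneg (ha : ∀ i, 0 ≤ a 0 i) (hlam : 0 < lam) (j : ZLat d) :
    0 ≤ phat a lam K j := by
  have := cRate_nonneg ha
  unfold phat; split_ifs <;> first | positivity | exact div_nonneg (ha j) (by positivity)

theorem phat_pos_of_pos (ha : ∀ i, 0 ≤ a 0 i) (hlam : 0 < lam) (hK : 0 < K) {j : ZLat d}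
    (hj : 0 < a 0 j) : 0 < phat a lam K j := by
  have := cRate_nonneg ha
  have : (0 : ℝ) < K := by exact_mod_cast hK
  unfold phat; split_ifs <;> positivity

theorem qs_lt_one (ha : ∀ i, 0 ≤ a 0 i) (hlam : 0 < lam) (hK : 0 < K) : qs a lam K < 1 := by
  have := cRate_nonneg ha
  have : (0 : ℝ) < K := by exact_mod_cast hK
  rw [qs, div_lt_one (by positivity)]
  nlinarith

theorem omegaE_pos (ha : ∀ i, 0 ≤ a 0 i) (hlam : 0 < lam) (e : EnvSpace d K) (i : ZLat d) :
    0 < omegaE a lam e i := by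
  have := cRate_nonneg ha
  have := two_le_Nsize e i
  have := two_le_Msize e i
  unfold omegaE; positivity

end Rates

section Slices

variable {α β : Type*} [MeasurableSpace α] [MeasurableSpace β] {Q : Measure (α × β)}
  {μ : Measure α}

theorem ae_slice_of_ae {b : β} (hnull : ∀ S, MeasurableSet S → Q (S ×ˢ {b}) = 0 → μ S = 0)
    {P : α × β → Prop} (hP : ∀ᵐ x ∂Q, P x) : ∀ᵐ x ∂μ, P (x, b) := by
  set N := toMeasurable Q {x | ¬ P x}
  have hN : Q N = 0 := by rw [measure_toMeasurable]; exact ae_iff.1 hP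
  rw [ae_iff]
  refine measure_mono_null (fun x hx => subset_toMeasurable Q {x | ¬ P x} hx) (hnull _
    ((measurableSet_toMeasurable Q _).preimage measurable_prodMk_right) (measure_mono_null ?_ hN))
  rintro ⟨x, b'⟩ ⟨hx, rfl⟩
  exact hx

theorem measure_eq_zero_of_forall_slice_null [Countable β]
    (hnull : ∀ b S, MeasurableSet S → μ S = 0 → Q (S ×ˢ {b}) = 0) {A : Set (α × β)}
    (hA : MeasurableSet A) (h : ∀ b, μ {x | (x, b) ∈ A} = 0) : Q A = 0 :=
  measure_mono_null (t := ⋃ b, {x | (x, b) ∈ A} ×ˢ {b})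
    (fun x hx => Set.mem_iUnion.2 ⟨x.2, hx, rfl⟩)
    (measure_iUnion_null fun b => hnull b _ (hA.preimage measurable_prodMk_right) (h b))

theorem measure_eq_zero_or_one_of_slices_ae_eq [Countable β] [IsProbabilityMeasure Q]
    [IsProbabilityMeasure μ] (hnull : ∀ b S, MeasurableSet S → μ S = 0 → Q (S ×ˢ {b}) = 0)
    {A : Set (α × β)} (hA : MeasurableSet A) {B : Set α} (hB : MeasurableSet B)
    (hslice : ∀ b, {x | (x, b) ∈ A} =ᵐ[μ] B) (h01 : μ B = 0 ∨ μ B = 1) :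
    Q A = 0 ∨ Q A = 1 := by
  rcases h01 with h | h
  · exact Or.inl (measure_eq_zero_of_forall_slice_null hnull hA fun b =>
      (measure_congr (hslice b)).trans h)
  · refine Or.inr ((prob_compl_eq_zero_iff hA).1
      (measure_eq_zero_of_forall_slice_null hnull hA.compl fun b => ?_))
    exact (measure_congr (hslice b).compl).trans ((prob_compl_eq_zero_iff hB).2 h)

end Slices

theorem measure_prod_singleton_eq_zero_iff {d K : ℕ} (Pbar : Measure (EnvSpace d K))
    [IsFiniteMeasure Pbar] (Q : Measure (EnvSpace d K × Bool))
    (hQ1 : ∀ A : Set (EnvSpace d K), MeasurableSet A →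
      Q (A ×ˢ ({true} : Set Bool)) =
        ENNReal.ofReal (1 / (1 + ∫ e', Msize e' 0 / Nsize e' 0 ∂Pbar)) * Pbar A)
    (hQ0 : ∀ A : Set (EnvSpace d K), MeasurableSet A →
      Q (A ×ˢ ({false} : Set Bool)) =
        ENNReal.ofReal ((1 / (1 + ∫ e', Msize e' 0 / Nsize e' 0 ∂Pbar)) *
          ∫ e' in A, Msize e' 0 / Nsize e' 0 ∂Pbar))
    (b : Bool) {S : Set (EnvSpace d K)} (hS : MeasurableSet S) :
    Q (S ×ˢ {b}) = 0 ↔ Pbar S = 0 := by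
  have hpos := fun e : EnvSpace d K => Msize_div_Nsize_pos e 0
  have hc : 0 < 1 / (1 + ∫ e, Msize e 0 / Nsize e 0 ∂Pbar) := by
    have : 0 ≤ ∫ e, Msize e 0 / Nsize e 0 ∂Pbar := integral_nonneg fun e => (hpos e).le
    positivity
  cases b
  · rw [hQ0 S hS, ENNReal.ofReal_eq_zero, ← not_lt, mul_pos_iff_of_pos_left hc,
      setIntegral_pos_iff_support_of_nonneg_ae (ae_of_all _ fun e => (hpos e).le)
        (integrable_Msize_div_Nsize Pbar).integrableOn,
      Function.support_eq_univ fun e => (hpos e).ne', Set.univ_inter, pos_iff_ne_zero, not_not]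
  · rw [hQ1 S hS, mul_eq_zero, ENNReal.ofReal_eq_zero, or_iff_right hc.not_ge]

section Harmonic

variable {d K : ℕ} {a : ZLat d → ZLat d → ℝ} {lam : ℝ}

theorem apply_true_eq_apply_false_of_Rop_eq (ha : ∀ i, 0 ≤ a 0 i) (hlam : 0 < lam)
    {f : EnvSpace d K × Bool → ℝ} {e : EnvSpace d K}
    (h : Rop a lam f (e, false) = f (e, false)) : f (e, true) = f (e, false) := by
  have h' : omegaE a lam e 0 * (f (e, true) - f (e, false)) = 0 := by
    have : omegaE a lam e 0 * f (e, true) + (1 - omegaE a lam e 0) * f (e, false) =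
      f (e, false) := h
    linear_combination this
  exact sub_eq_zero.1 ((mul_eq_zero.1 h').resolve_left (omegaE_pos ha hlam e 0).ne')

theorem tsum_phat_mul_eq_of_Rop_eq (ha : ∀ i, 0 ≤ a 0 i) (hlam : 0 < lam) (hK : 0 < K)
    {f : EnvSpace d K × Bool → ℝ} {e : EnvSpace d K}
    (h : Rop a lam f (e, true) = f (e, true)) (hf : f (e, false) = f (e, true)) :
    ∑' j, phat a lam K j * f (shiftT j e, true) = f (e, true) := by
  have h' :
      (1 - qs a lam K) * (∑' j, phat a lam K j * f (shiftT j e, true) - f (e, true)) = 0 := by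
    have : qs a lam K * f (e, false) +
      (1 - qs a lam K) * ∑' j, phat a lam K j * f (shiftT j e, true) = f (e, true) := h
    rw [hf] at this
    linear_combination this
  exact sub_eq_zero.1 ((mul_eq_zero.1 h').resolve_left (sub_pos.2 (qs_lt_one ha hlam hK)).ne')

variable {μ : Measure (EnvSpace d K)} {A : Set (EnvSpace d K × Bool)}

theorem slice_false_ae_eq_slice_true (ha : ∀ i, 0 ≤ a 0 i) (hlam : 0 < lam)
    (hfix : ∀ᵐ e ∂μ, Rop a lam (A.indicator fun _ => (1 : ℝ)) (e, false) =
      A.indicator (fun _ => 1) (e, false)) :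
    {e | (e, false) ∈ A} =ᵐ[μ] {e | (e, true) ∈ A} :=
  eventuallyEq_set.2 <| hfix.mono fun _ he =>
    (indicator_one_eq_indicator_one_iff.1 (apply_true_eq_apply_false_of_Rop_eq ha hlam he)).symm

theorem preimage_shiftT_slice_ae_eq (ha : ∀ i, 0 ≤ a 0 i) (ha_sum : Summable (a 0))
    (hlam : 0 < lam) (hK : 0 < K)
    (hfix : ∀ b, ∀ᵐ e ∂μ, Rop a lam (A.indicator fun _ => (1 : ℝ)) (e, b) =
      A.indicator (fun _ => 1) (e, b))
    {j : ZLat d} (hj : 0 < phat a lam K j) :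
    shiftT j ⁻¹' {e | (e, true) ∈ A} =ᵐ[μ] {e | (e, true) ∈ A} := by
  refine eventuallyEq_set.2 ?_
  filter_upwards [hfix true,
    eventuallyEq_set.1 (slice_false_ae_eq_slice_true ha hlam (hfix false))] with e htrue hslice
  have h01 : ∀ x, A.indicator (fun _ => (1 : ℝ)) x = 0 ∨ A.indicator (fun _ => (1 : ℝ)) x = 1 :=
    fun x => by by_cases hx : x ∈ A <;> simp [hx]
  have hmean := tsum_phat_mul_eq_of_Rop_eq ha hlam hK htrue
    (indicator_one_eq_indicator_one_iff.2 hslice)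
  exact indicator_one_eq_indicator_one_iff.1 <|
    eq_of_tsum_mul_eq_of_mem_Icc (phat_nonneg ha hlam) (hasSum_phat ha ha_sum hlam hK)
      (fun i => by rcases h01 (shiftT i e, true) with h | h <;> simp [h]) (h01 _) hmean hj

end Harmonic

theorem ergodicity_of_environment_process_general
    (d K : ℕ) (hK : 2 ≤ K)
    (a : ZLat d → ZLat d → ℝ) (lam : ℝ) (hlam : 0 < lam)
    (ha_nonneg : ∀ i j, 0 ≤ a i j)
    (ha_irr : ∀ i : ZLat d, ∃ n : ℕ, 0 < convPow (a 0) n i)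
    (ha_sum : Summable (a 0))
    (Pbar : Measure (EnvSpace d K)) [IsProbabilityMeasure Pbar]
    (hPinv : ∀ (j : ZLat d) (A : Set (EnvSpace d K)), MeasurableSet A →
      Pbar (shiftT j ⁻¹' A) = Pbar A)
    (hPerg : ∀ A : Set (EnvSpace d K), MeasurableSet A →
      (∀ j : ZLat d, shiftT j ⁻¹' A = A) → Pbar A = 0 ∨ Pbar A = 1)
    (Q : Measure (EnvSpace d K × Bool)) [IsProbabilityMeasure Q]
    (hQ1 : ∀ A : Set (EnvSpace d K), MeasurableSet A →
      Q (A ×ˢ ({true} : Set Bool)) =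
        ENNReal.ofReal (1 / (1 + ∫ e', Msize e' 0 / Nsize e' 0 ∂Pbar)) * Pbar A)
    (hQ0 : ∀ A : Set (EnvSpace d K), MeasurableSet A →
      Q (A ×ˢ ({false} : Set Bool)) =
        ENNReal.ofReal ((1 / (1 + ∫ e', Msize e' 0 / Nsize e' 0 ∂Pbar)) *
          ∫ e' in A, Msize e' 0 / Nsize e' 0 ∂Pbar))
    :
    ∀ A : Set (EnvSpace d K × Bool), MeasurableSet A →
      (∀ᵐ x ∂Q, Rop a lam (A.indicator fun _ => (1:ℝ)) x = A.indicator (fun _ => (1:ℝ)) x) →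
      Q A = 0 ∨ Q A = 1 := by
  intro A hA hfix
  have hK₀ : 0 < K := by omega
  have ha : ∀ i, 0 ≤ a 0 i := ha_nonneg 0
  have hnull : ∀ b S, MeasurableSet S → (Q (S ×ˢ {b}) = 0 ↔ Pbar S = 0) :=
    fun b _ hS => measure_prod_singleton_eq_zero_iff Pbar Q hQ1 hQ0 b hS
  have hfix' : ∀ b, ∀ᵐ e ∂Pbar, Rop a lam (A.indicator fun _ => (1 : ℝ)) (e, b) =
      A.indicator (fun _ => 1) (e, b) :=
    fun b => ae_slice_of_ae (fun S hS => (hnull b S hS).1) hfix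
  have hA₁ : MeasurableSet {e | (e, true) ∈ A} := hA.preimage measurable_prodMk_right
  have hinv : ∀ i, shiftT i ⁻¹' {e | (e, true) ∈ A} =ᵐ[Pbar] {e | (e, true) ∈ A} := fun i =>
    have ⟨_, hn⟩ := ha_irr i
    preimage_shiftT_ae_eq_of_convPow_pos hPinv ha (fun _ hj =>
      preimage_shiftT_slice_ae_eq ha ha_sum hlam hK₀ hfix' (phat_pos_of_pos ha hlam hK₀ hj)) hn
  refine measure_eq_zero_or_one_of_slices_ae_eq (fun b S hS => (hnull b S hS).2) hA hA₁ ?_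
    (measure_eq_zero_or_one_of_ae_shift_invariant Pbar hPerg hA₁ hinv)
  rintro (_ | _)
  · exact slice_false_ae_eq_slice_true ha hlam (hfix' false)
  · exact EventuallyEq.rfl

/-- Ergodicity of the environment process under `Q`. -/
theorem ergodicity_of_environment_process
    (d K : ℕ) (hd : 1 ≤ d) (hK : 2 ≤ K)
    (a : ZLat d → ZLat d → ℝ) (lam : ℝ) (hlam : 0 < lam)
    (ha_nonneg : ∀ i j, 0 ≤ a i j)
    (ha_transl : ∀ i j, a i j = a 0 (j - i))
    (ha_irr : ∀ i : ZLat d, ∃ n : ℕ, 0 < convPow (a 0) n i)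
    (ha_sum : Summable (a 0))
    (ha00 : 0 < a 0 0)
    (Pbar : Measure (EnvSpace d K)) [IsProbabilityMeasure Pbar]
    (hPinv : ∀ (j : ZLat d) (A : Set (EnvSpace d K)), MeasurableSet A →
      Pbar (shiftT j ⁻¹' A) = Pbar A)
    (hPerg : ∀ A : Set (EnvSpace d K), MeasurableSet A →
      (∀ j : ZLat d, shiftT j ⁻¹' A = A) → Pbar A = 0 ∨ Pbar A = 1)
    (Q : Measure (EnvSpace d K × Bool)) [IsProbabilityMeasure Q]
    (hQ1 : ∀ A : Set (EnvSpace d K), MeasurableSet A →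
      Q (A ×ˢ ({true} : Set Bool)) =
        ENNReal.ofReal (1 / (1 + ∫ e', Msize e' 0 / Nsize e' 0 ∂Pbar)) * Pbar A)
    (hQ0 : ∀ A : Set (EnvSpace d K), MeasurableSet A →
      Q (A ×ˢ ({false} : Set Bool)) =
        ENNReal.ofReal ((1 / (1 + ∫ e', Msize e' 0 / Nsize e' 0 ∂Pbar)) *
          ∫ e' in A, Msize e' 0 / Nsize e' 0 ∂Pbar))
    :
    ∀ A : Set (EnvSpace d K × Bool), MeasurableSet A →
      (∀ᵐ x ∂Q, Rop a lam (A.indicator fun _ => (1:ℝ)) x = A.indicator (fun _ => (1:ℝ)) x) →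
      Q A = 0 ∨ Q A = 1 :=
  ergodicity_of_environment_process_general d K hK a lam hlam ha_nonneg ha_irr ha_sum Pbar hPinv
    hPerg Q hQ1 hQ0
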